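/- arXiv:1801.06430 — 7 statements merged into one kernel-verified Lean document; each statement's English description precedes it below -/
import Mathlib

section
/- Let F(X) = A^T (Ω + H (Ψ + K X K^T)^{-1} H^T)^{-1} A, where Ω, Ψ are symmetric positive definite matrices and A, H, K are arbitrary real matrices of compatible dimensions. Then F is monotone with respect to the Loewner order on positive semidefinite matrices: if X ⪰ Y ⪰ 0 then F(X) ⪰ F(Y). -/
open Matrix

private lemma psd_conj {k l : ℕ} {M : Matrix (Fin k) (Fin k) ℝ} (hM : M.PosSemidef)
    (B : Matrix (Fin l) (Fin k) ℝ) : (B * M * Bᵀ).PosSemidef := by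
  simpa [Matrix.conjTranspose_eq_transpose_of_trivial] using hM.mul_mul_conjTranspose_same B

set_option maxHeartbeats 1000000 in
/-- If A ⪰ B ≻ 0 then B⁻¹ ⪰ A⁻¹. -/
private lemma inv_antitone {k : ℕ} {A B : Matrix (Fin k) (Fin k) ℝ}
    (hB : B.PosDef) (hAB : (A - B).PosSemidef) : (B⁻¹ - A⁻¹).PosSemidef := by
  have hA : A.PosDef := by simpa using hB.add_posSemidef hAB
  have hAi : A⁻¹ * A = 1 := Matrix.nonsing_inv_mul A ((Matrix.isUnit_iff_isUnit_det A).mp hA.isUnit)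
  have hAi' : A * A⁻¹ = 1 := Matrix.mul_nonsing_inv A ((Matrix.isUnit_iff_isUnit_det A).mp hA.isUnit)
  have hBi : B⁻¹ * B = 1 := Matrix.nonsing_inv_mul B ((Matrix.isUnit_iff_isUnit_det B).mp hB.isUnit)
  have hBi' : B * B⁻¹ = 1 := Matrix.mul_nonsing_inv B ((Matrix.isUnit_iff_isUnit_det B).mp hB.isUnit)
  set D := A - B with hD
  have key : B⁻¹ - A⁻¹ = A⁻¹ * D * A⁻¹ + (D * A⁻¹)ᵀ * B⁻¹ * (D * A⁻¹) := by
    have hDsym : Dᵀ = D := hAB.isHermitian.eq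
    have hAsym : A⁻¹ᵀ = A⁻¹ := hA.inv.isHermitian.eq
    rw [Matrix.transpose_mul, hDsym, hAsym]
    have : A⁻¹ * D * A⁻¹ + A⁻¹ * (D * (B⁻¹ * (D * A⁻¹)))
        = A⁻¹ * D * (B⁻¹ * (B + D)) * A⁻¹ := by
      simp only [Matrix.mul_add, Matrix.add_mul, Matrix.mul_assoc, hBi]
      simp [Matrix.mul_assoc]
    rw [show A⁻¹ * D * B⁻¹ * (D * A⁻¹) = A⁻¹ * (D * (B⁻¹ * (D * A⁻¹))) by
      simp [Matrix.mul_assoc], this]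
    have hBD : B + D = A := by simp [hD]
    rw [hBD]
    have : B⁻¹ * A * A⁻¹ = B⁻¹ := by rw [Matrix.mul_assoc, hAi', Matrix.mul_one]
    rw [Matrix.mul_assoc, Matrix.mul_assoc, this]
    have : A⁻¹ * (D * B⁻¹) = A⁻¹ * (A * B⁻¹) - A⁻¹ * (B * B⁻¹) := by
      simp [hD, Matrix.sub_mul, Matrix.mul_sub]
    rw [this, ← Matrix.mul_assoc, ← Matrix.mul_assoc, hAi, Matrix.mul_assoc, hBi']
    simp
  rw [key]
  have hAsym : A⁻¹ᵀ = A⁻¹ := hA.inv.isHermitian.eq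
  have h2 := (psd_conj hAB A⁻¹).add (psd_conj hB.inv.posSemidef (D * A⁻¹)ᵀ)
  simpa [Matrix.transpose_transpose, hAsym] using h2

/-- Monotonicity of F(X) = Aᵀ (Ω + H (Ψ + K X Kᵀ)⁻¹ Hᵀ)⁻¹ A with respect to the
Loewner order: if X ⪰ Y ⪰ 0 then F(X) ⪰ F(Y). -/
theorem gbp_update_monotone {n m p q : ℕ}
    (A : Matrix (Fin m) (Fin n) ℝ) (Ω : Matrix (Fin m) (Fin m) ℝ)
    (H : Matrix (Fin m) (Fin p) ℝ) (Ψ : Matrix (Fin p) (Fin p) ℝ)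
    (K : Matrix (Fin p) (Fin q) ℝ)
    (hΩ : Ω.PosDef) (hΨ : Ψ.PosDef)
    (X Y : Matrix (Fin q) (Fin q) ℝ)
    (hY : Y.PosSemidef) (hXY : (X - Y).PosSemidef) :
    ((Aᵀ * (Ω + H * (Ψ + K * X * Kᵀ)⁻¹ * Hᵀ)⁻¹ * A)
      - (Aᵀ * (Ω + H * (Ψ + K * Y * Kᵀ)⁻¹ * Hᵀ)⁻¹ * A)).PosSemidef := by
  set SY := Ψ + K * Y * Kᵀ with hSY
  set SX := Ψ + K * X * Kᵀ with hSX
  have hSYpd : SY.PosDef := by simpa [hSY] using hΨ.add_posSemidef (psd_conj hY K)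
  have hdiff : (SX - SY).PosSemidef := by
    have : SX - SY = K * (X - Y) * Kᵀ := by
      simp [hSX, hSY, Matrix.mul_sub, Matrix.sub_mul]
    rw [this]; exact psd_conj hXY K
  have hinv1 : (SY⁻¹ - SX⁻¹).PosSemidef := inv_antitone hSYpd hdiff
  set TX := Ω + H * SX⁻¹ * Hᵀ with hTX
  set TY := Ω + H * SY⁻¹ * Hᵀ with hTY
  have hSXpd : SX.PosDef := by simpa using hSYpd.add_posSemidef hdiff
  have hTXpd : TX.PosDef := by
    simpa [hTX] using hΩ.add_posSemidef (psd_conj hSXpd.inv.posSemidef H)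
  have hdiff2 : (TY - TX).PosSemidef := by
    have : TY - TX = H * (SY⁻¹ - SX⁻¹) * Hᵀ := by
      simp [hTX, hTY, Matrix.mul_sub, Matrix.sub_mul]
    rw [this]; exact psd_conj hinv1 H
  have hinv2 : (TX⁻¹ - TY⁻¹).PosSemidef := inv_antitone hTXpd hdiff2
  have : Aᵀ * TX⁻¹ * A - Aᵀ * TY⁻¹ * A = Aᵀ * (TX⁻¹ - TY⁻¹) * A := by
    simp [Matrix.mul_sub, Matrix.sub_mul]
  rw [this]
  simpa [Matrix.conjTranspose_eq_transpose_of_trivial] using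
    hinv2.conjTranspose_mul_mul_same A
end

section
/- Let F(X) = A^T (Ω + H (Ψ + K X K^T)^{-1} H^T)^{-1} A with Ω, Ψ symmetric positive definite and A having trivial kernel. For any positive definite X and any scalar α > 1, one has α·F(X) ≻ F(α·X), i.e., α·F(X) - F(α·X) is positive definite. -/
/-!
Write `S = Ψ + K X Kᵀ`, `M = Ω + H S⁻¹ Hᵀ`, and `S_α`, `M_α` for the same expressions at `α X`.
Inversion is strictly antitone on positive definite matrices: `A ≺ B` gives `B⁻¹ ≺ A⁻¹`, since
`x ⬝ (A⁻¹ - B⁻¹) x = (u - v) ⬝ A (u - v) + v ⬝ (B - A) v` with `u = A⁻¹ x`, `v = B⁻¹ x`.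
Now `α S - S_α = (α - 1) Ψ ≻ 0`, so `α⁻¹ S⁻¹ ≺ S_α⁻¹` and hence
`α⁻¹ M = α⁻¹ Ω + α⁻¹ H S⁻¹ Hᵀ ≺ Ω + H S_α⁻¹ Hᵀ = M_α`; inverting once more gives
`M_α⁻¹ ≺ α M⁻¹`, and the congruence by the injective `A` preserves this.
-/

open Matrix

namespace Matrix

variable {ι κ : Type*} [Fintype ι] [Fintype κ]

lemma inv_smul_of_ne_zero {K : Type*} [Field K] [DecidableEq ι] {A : Matrix ι ι K}
    (hA : IsUnit A.det) {c : K} (hc : c ≠ 0) : (c • A)⁻¹ = c⁻¹ • A⁻¹ := by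
  simpa [Units.smul_def] using inv_smul' A (Units.mk0 c hc) hA

lemma PosSemidef.mul_mul_transpose_same {D : Matrix ι ι ℝ} (hD : D.PosSemidef)
    (B : Matrix κ ι ℝ) : (B * D * Bᵀ).PosSemidef := by
  simpa using hD.mul_mul_conjTranspose_same B

lemma PosDef.transpose_mul_mul_same {D : Matrix ι ι ℝ} (hD : D.PosDef) {B : Matrix ι κ ℝ}
    (hB : Function.Injective B.mulVec) : (Bᵀ * D * B).PosDef := by
  simpa using hD.conjTranspose_mul_mul_same hB

variable [DecidableEq ι] [DecidableEq κ]

lemma PosDef.inv_sub_inv {A B : Matrix ι ι ℝ} (hA : A.PosDef) (hBA : (B - A).PosDef) :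
    (A⁻¹ - B⁻¹).PosDef := by
  have hB : B.PosDef := by simpa using hA.add hBA
  refine .of_dotProduct_mulVec_pos (hA.inv.isHermitian.sub hB.inv.isHermitian) fun x hx => ?_
  set u := A⁻¹ *ᵥ x
  set v := B⁻¹ *ᵥ x
  have hAu : A *ᵥ u = x := by simp [u, mulVec_mulVec, mul_nonsing_inv _ hA.det_pos.ne'.isUnit]
  have hBv : B *ᵥ v = x := by simp [v, mulVec_mulVec, mul_nonsing_inv _ hB.det_pos.ne'.isUnit]
  have hA_symm : u ⬝ᵥ (A *ᵥ v) = v ⬝ᵥ (A *ᵥ u) := by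
    rw [dotProduct_mulVec, ← mulVec_transpose, dotProduct_comm, ← conjTranspose_eq_transpose_of_trivial,
      hA.isHermitian.eq]
  have key : x ⬝ᵥ ((A⁻¹ - B⁻¹) *ᵥ x) = (u - v) ⬝ᵥ (A *ᵥ (u - v)) + v ⬝ᵥ ((B - A) *ᵥ v) := by
    simp only [sub_mulVec, mulVec_sub, dotProduct_sub, sub_dotProduct, hA_symm, hAu, hBv]
    rw [dotProduct_comm u x, dotProduct_comm v x]
    ring
  have hv : v ≠ 0 := fun h => hx (by rw [← hBv, h, mulVec_zero])
  have h₁ : 0 ≤ (u - v) ⬝ᵥ (A *ᵥ (u - v)) := by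
    simpa using hA.posSemidef.dotProduct_mulVec_nonneg (u - v)
  have h₂ : 0 < v ⬝ᵥ ((B - A) *ᵥ v) := by simpa using hBA.dotProduct_mulVec_pos hv
  simpa [key] using add_pos_of_nonneg_of_pos h₁ h₂

lemma PosDef.smul_inv_add_mul_inv_mul_transpose_sub {Ω : Matrix ι ι ℝ} {H : Matrix ι κ ℝ}
    {S S' : Matrix κ κ ℝ} (hΩ : Ω.PosDef) (hS : S.PosDef) (hS' : S'.PosDef) {α : ℝ}
    (hα : 1 < α) (hSS' : (α • S - S').PosDef) :
    (α • (Ω + H * S⁻¹ * Hᵀ)⁻¹ - (Ω + H * S'⁻¹ * Hᵀ)⁻¹).PosDef := by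
  have hα₀ : α ≠ 0 := by positivity
  have hM : (Ω + H * S⁻¹ * Hᵀ).PosDef :=
    hΩ.add_posSemidef (hS.inv.posSemidef.mul_mul_transpose_same H)
  have hS'_inv : (S'⁻¹ - α⁻¹ • S⁻¹).PosDef := by
    simpa only [inv_smul_of_ne_zero hS.det_pos.ne'.isUnit hα₀] using hS'.inv_sub_inv hSS'
  have hMM' : (Ω + H * S'⁻¹ * Hᵀ - α⁻¹ • (Ω + H * S⁻¹ * Hᵀ)).PosDef := by
    have e : Ω + H * S'⁻¹ * Hᵀ - α⁻¹ • (Ω + H * S⁻¹ * Hᵀ)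
        = (1 - α⁻¹) • Ω + H * (S'⁻¹ - α⁻¹ • S⁻¹) * Hᵀ := by
      simp only [smul_add, Matrix.mul_sub, Matrix.sub_mul, Matrix.mul_smul, Matrix.smul_mul,
        sub_smul, one_smul]
      abel
    rw [e]
    exact (hΩ.smul (by simpa using inv_lt_one_of_one_lt₀ hα)).add_posSemidef
      (hS'_inv.posSemidef.mul_mul_transpose_same H)
  simpa only [inv_smul_of_ne_zero hM.det_pos.ne'.isUnit (inv_ne_zero hα₀), inv_inv] using
    (hM.smul (inv_pos.2 (by positivity))).inv_sub_inv hMM'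

end Matrix

/-- Strict subhomogeneity: for F(X) = Aᵀ (Ω + H (Ψ + K X Kᵀ)⁻¹ Hᵀ)⁻¹ A with A injective,
X ≻ 0 and α > 1, one has α • F(X) ≻ F(α • X). -/
theorem gbp_update_strict_subhom {n m p q : ℕ}
    (A : Matrix (Fin m) (Fin n) ℝ) (Ω : Matrix (Fin m) (Fin m) ℝ)
    (H : Matrix (Fin m) (Fin p) ℝ) (Ψ : Matrix (Fin p) (Fin p) ℝ)
    (K : Matrix (Fin p) (Fin q) ℝ)
    (hΩ : Ω.PosDef) (hΨ : Ψ.PosDef)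
    (hA : ∀ v : Fin n → ℝ, A.mulVec v = 0 → v = 0)
    (X : Matrix (Fin q) (Fin q) ℝ) (hX : X.PosDef)
    (α : ℝ) (hα : 1 < α) :
    (α • (Aᵀ * (Ω + H * (Ψ + K * X * Kᵀ)⁻¹ * Hᵀ)⁻¹ * A)
      - (Aᵀ * (Ω + H * (Ψ + K * (α • X) * Kᵀ)⁻¹ * Hᵀ)⁻¹ * A)).PosDef := by
  have hα₀ : 0 < α := by positivity
  have hS : (Ψ + K * X * Kᵀ).PosDef := hΨ.add_posSemidef (hX.posSemidef.mul_mul_transpose_same K)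
  have hSα : (Ψ + K * (α • X) * Kᵀ).PosDef :=
    hΨ.add_posSemidef ((hX.smul hα₀).posSemidef.mul_mul_transpose_same K)
  have hgap : (α • (Ψ + K * X * Kᵀ) - (Ψ + K * (α • X) * Kᵀ)).PosDef := by
    have e : α • (Ψ + K * X * Kᵀ) - (Ψ + K * (α • X) * Kᵀ) = (α - 1) • Ψ := by
      simp only [smul_add, Matrix.mul_smul, Matrix.smul_mul, sub_smul, one_smul]
      abel
    exact e ▸ hΨ.smul (sub_pos.2 hα)
  have hA_inj : Function.Injective A.mulVec := (injective_iff_map_eq_zero A.mulVecLin).2 hA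
  rw [show ∀ M M' : Matrix (Fin m) (Fin m) ℝ, α • (Aᵀ * M * A) - Aᵀ * M' * A = Aᵀ * (α • M - M') * A
    by intros; simp only [Matrix.mul_sub, Matrix.sub_mul, Matrix.mul_smul, Matrix.smul_mul]]
  exact (hΩ.smul_inv_add_mul_inv_mul_transpose_sub hS hSα hα hgap).transpose_mul_mul_same hA_inj
end

section
/- Let F be a map on positive definite n×n matrices satisfying: (i) monotonicity (X ⪰ Y ⪰ 0 implies F(X) ⪰ F(Y)), and (ii) strict subhomogeneity (for all X ≻ 0 and α > 1, α·F(X) ≻ F(α·X) and F(α^{-1}X) ≻ α^{-1}F(X)). Then F has at most one positive definite fixed point. -/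
/-!
Let `a` be the largest generalized Rayleigh quotient `xᵀYx / xᵀXx` and `b` the largest
`xᵀXx / xᵀYx`; both are attained, so `a • X - Y` and `b • Y - X` are positive semidefinite but
not positive definite. With `α = max a b` we have `α⁻¹ • X ≤ Y ≤ α • X`. If `α ≤ 1` this forces
`X = Y`. If `α > 1`, monotonicity and strict subhomogeneity at the fixed points give
`Y = F Y ≤ F (α • X) < α • F X = α • X`, and symmetrically `X < α • Y`, so both `α • X - Y` and
`α • Y - X` are positive definite, contradicting the choice of `α`.
-/

open Matrix

namespace Matrix

section Order

variable {n : Type*}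

theorem PosSemidef.smul_sub_of_le {X Y : Matrix n n ℝ} {a b : ℝ} (h : (a • X - Y).PosSemidef)
    (hX : X.PosSemidef) (hab : a ≤ b) : (b • X - Y).PosSemidef := by
  convert h.add (hX.smul (sub_nonneg.mpr hab)) using 1
  module

variable {F : Matrix n n ℝ → Matrix n n ℝ}

theorem posDef_smul_sub_of_isFixedPt
    (hmono : ∀ X Y : Matrix n n ℝ, Y.PosSemidef → (X - Y).PosSemidef → (F X - F Y).PosSemidef)
    (hsub : ∀ (X : Matrix n n ℝ) (α : ℝ), X.PosDef → 1 < α → (α • F X - F (α • X)).PosDef)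
    {X Y : Matrix n n ℝ} (hX : X.PosDef) (hY : Y.PosSemidef)
    (hfX : Function.IsFixedPt F X) (hfY : Function.IsFixedPt F Y)
    {α : ℝ} (hα : 1 < α) (hXY : (α • X - Y).PosSemidef) : (α • X - Y).PosDef := by
  have h := (hsub X α hX hα).add_posSemidef (hmono (α • X) Y hY hXY)
  rwa [hfX, hfY, sub_add_sub_cancel] at h

end Order

section RayleighQuotient

variable {n : Type*} [Fintype n]

lemma smul_dotProduct_mulVec_smul (A : Matrix n n ℝ) (t : ℝ) (x : n → ℝ) :
    (t • x) ⬝ᵥ A *ᵥ (t • x) = t ^ 2 * (x ⬝ᵥ A *ᵥ x) := by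
  simp only [mulVec_smul, dotProduct_smul, smul_dotProduct, smul_eq_mul]
  ring

/-- Take `c` the maximum of `xᵀYx / xᵀXx`, attained on the unit sphere by compactness and
everywhere else by homogeneity; the maximizer is a null vector of `c • X - Y`. -/
theorem PosDef.exists_smul_sub_posSemidef_not_posDef [Nonempty n] {X Y : Matrix n n ℝ}
    (hX : X.PosDef) (hY : Y.IsHermitian) :
    ∃ c : ℝ, (c • X - Y).PosSemidef ∧ ¬ (c • X - Y).PosDef := by
  have hqX : ∀ x : n → ℝ, x ≠ 0 → 0 < x ⬝ᵥ X *ᵥ x := fun x hx => by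
    simpa using hX.dotProduct_mulVec_pos hx
  set f : (n → ℝ) → ℝ := fun x => x ⬝ᵥ Y *ᵥ x / x ⬝ᵥ X *ᵥ x
  have hf_cont : ContinuousOn f (Metric.sphere 0 1) := by
    refine ContinuousOn.div (by fun_prop) (by fun_prop) fun x hx => (hqX x ?_).ne'
    rintro rfl
    simp at hx
  obtain ⟨x₀, hx₀, hmax⟩ := (isCompact_sphere (0 : n → ℝ) 1).exists_isMaxOn
    (NormedSpace.sphere_nonempty.mpr zero_le_one) hf_cont
  have hx₀_ne : x₀ ≠ 0 := by rintro rfl; simp at hx₀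
  have hle : ∀ x : n → ℝ, x ≠ 0 → f x ≤ f x₀ := by
    intro x hx
    have hnorm : ‖x‖ ≠ 0 := norm_ne_zero_iff.mpr hx
    have hsphere : ‖x‖⁻¹ • x ∈ Metric.sphere (0 : n → ℝ) 1 := by
      simp [norm_smul, hnorm]
    calc f x = f (‖x‖⁻¹ • x) := by
          simp only [f, smul_dotProduct_mulVec_smul]
          rw [mul_div_mul_left _ _ (by positivity)]
      _ ≤ f x₀ := hmax hsphere
  refine ⟨f x₀, .of_dotProduct_mulVec_nonneg ((hX.isHermitian.smul (.all _)).sub hY) fun x => ?_,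
    fun hpd => ?_⟩
  · simp only [star_trivial, sub_mulVec, smul_mulVec, dotProduct_sub, dotProduct_smul,
      smul_eq_mul, sub_nonneg]
    rcases eq_or_ne x 0 with rfl | hx
    · simp
    · exact (div_le_iff₀ (hqX x hx)).mp (hle x hx)
  · have h := hpd.dotProduct_mulVec_pos hx₀_ne
    simp only [star_trivial, sub_mulVec, smul_mulVec, dotProduct_sub, dotProduct_smul,
      smul_eq_mul, f, div_mul_cancel₀ _ (hqX x₀ hx₀_ne).ne', sub_self] at h
    exact h.false

end RayleighQuotient

end Matrix

/-- A monotone, strictly subhomogeneous map on positive definite matrices has at most one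
positive definite fixed point. -/
theorem unique_posdef_fixed_point {n : ℕ}
    (F : Matrix (Fin n) (Fin n) ℝ → Matrix (Fin n) (Fin n) ℝ)
    (hmono : ∀ X Y : Matrix (Fin n) (Fin n) ℝ,
      Y.PosSemidef → (X - Y).PosSemidef → (F X - F Y).PosSemidef)
    (hsub : ∀ (X : Matrix (Fin n) (Fin n) ℝ) (α : ℝ), X.PosDef → 1 < α →
      (α • F X - F (α • X)).PosDef ∧ (F (α⁻¹ • X) - α⁻¹ • F X).PosDef)
    (X Y : Matrix (Fin n) (Fin n) ℝ)
    (hX : X.PosDef) (hY : Y.PosDef) (hfX : F X = X) (hfY : F Y = Y) :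
    X = Y := by
  rcases isEmpty_or_nonempty (Fin n) with hn | hn
  · exact Subsingleton.elim X Y
  obtain ⟨a, haXY, ha⟩ := hX.exists_smul_sub_posSemidef_not_posDef hY.isHermitian
  obtain ⟨b, hbYX, hb⟩ := hY.exists_smul_sub_posSemidef_not_posDef hX.isHermitian
  have hαXY := haXY.smul_sub_of_le hX.posSemidef (le_max_left a b)
  have hαYX := hbYX.smul_sub_of_le hY.posSemidef (le_max_right a b)
  rcases le_or_gt (max a b) 1 with hα | hα
  · have hXY : (X - Y).PosSemidef := by simpa using hαXY.smul_sub_of_le hX.posSemidef hα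
    have hYX : (Y - X).PosSemidef := by simpa using hαYX.smul_sub_of_le hY.posSemidef hα
    open scoped MatrixOrder in exact le_antisymm hYX hXY
  · have hsub₁ := fun X α hX hα => (hsub X α hX hα).1
    have hXY := posDef_smul_sub_of_isFixedPt hmono hsub₁ hX hY.posSemidef hfX hfY hα hαXY
    have hYX := posDef_smul_sub_of_isFixedPt hmono hsub₁ hY hX.posSemidef hfY hfX hα hαYX
    rcases max_choice a b with h | h <;> rw [h] at hXY hYX
    exacts [(ha hXY).elim, (hb hYX).elim]
end

section
/- Consider the scalar recursion J^{(ℓ)} = a²·(r + h²·(w + k²·J^{(ℓ-1)})^{-1})^{-1} with constants a ≠ 0, r > 0, h, w > 0, k real. Then for any initial J^{(0)} ≥ 0 the sequence J^{(ℓ)} converges to the unique nonnegative fixed point of the map f(x) = a²/(r + h²/(w + k²x)). -/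
open Filter Topology

private lemma gbp_iter_incr (f : ℝ → ℝ) (U : ℝ)
    (hnn : ∀ x, 0 ≤ x → 0 ≤ f x)
    (hmono : ∀ x y, 0 ≤ x → x ≤ y → f x ≤ f y)
    (hU : ∀ x, 0 ≤ x → f x ≤ U)
    (hcont : ∀ x, 0 ≤ x → ContinuousAt f x)
    (J0 : ℝ) (h0 : 0 ≤ J0) (hstep : J0 ≤ f J0) :
    ∃ y, 0 ≤ y ∧ f y = y ∧ Tendsto (fun n => f^[n] J0) atTop (𝓝 y) := by
  set S : ℕ → ℝ := fun n => f^[n] J0 with hS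
  have hSsucc : ∀ n, S (n+1) = f (S n) := fun n => Function.iterate_succ_apply' ..
  have hSnn : ∀ n, 0 ≤ S n := by
    intro n; induction n with
    | zero => exact h0
    | succ n ih => rw [hSsucc]; exact hnn _ ih
  have hSmono : Monotone S := by
    apply monotone_nat_of_le_succ
    intro n
    induction n with
    | zero => simpa [hS] using hstep
    | succ n ih =>
      rw [hSsucc, hSsucc]
      exact hmono _ _ (hSnn n) ih
  have hBdd : BddAbove (Set.range S) := by
    refine ⟨max J0 U, ?_⟩
    rintro _ ⟨n, rfl⟩
    cases n with
    | zero => exact le_max_left _ _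
    | succ n => rw [hSsucc]; exact le_max_of_le_right (hU _ (hSnn n))
  have hlim := tendsto_atTop_ciSup hSmono hBdd
  set y := ⨆ n, S n with hy
  have hy0 : 0 ≤ y := le_trans (hSnn 0) (le_ciSup hBdd 0)
  refine ⟨y, hy0, ?_, hlim⟩
  have h1 : Tendsto (fun n => f (S n)) atTop (𝓝 (f y)) := (hcont y hy0).tendsto.comp hlim
  have h2 : Tendsto (fun n => S (n+1)) atTop (𝓝 y) := hlim.comp (tendsto_add_atTop_nat 1)
  have h3 : (fun n => f (S n)) = fun n => S (n+1) := by
    funext n; exact (hSsucc n).symm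
  rw [h3] at h1
  exact tendsto_nhds_unique h1 h2

private lemma gbp_iter_decr (f : ℝ → ℝ)
    (hnn : ∀ x, 0 ≤ x → 0 ≤ f x)
    (hmono : ∀ x y, 0 ≤ x → x ≤ y → f x ≤ f y)
    (hcont : ∀ x, 0 ≤ x → ContinuousAt f x)
    (J0 : ℝ) (h0 : 0 ≤ J0) (hstep : f J0 ≤ J0) :
    ∃ y, 0 ≤ y ∧ f y = y ∧ Tendsto (fun n => f^[n] J0) atTop (𝓝 y) := by
  set S : ℕ → ℝ := fun n => f^[n] J0 with hS
  have hSsucc : ∀ n, S (n+1) = f (S n) := fun n => Function.iterate_succ_apply' ..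
  have hSnn : ∀ n, 0 ≤ S n := by
    intro n; induction n with
    | zero => exact h0
    | succ n ih => rw [hSsucc]; exact hnn _ ih
  have hSanti : Antitone S := by
    apply antitone_nat_of_succ_le
    intro n
    induction n with
    | zero => simpa [hS] using hstep
    | succ n ih =>
      have := hmono _ _ (hSnn (n+1)) ih
      rwa [← hSsucc, ← hSsucc] at this
  have hBdd : BddBelow (Set.range S) := by
    refine ⟨0, ?_⟩
    rintro _ ⟨n, rfl⟩
    exact hSnn n
  have hlim := tendsto_atTop_ciInf hSanti hBdd
  set y := ⨅ n, S n with hy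
  have hy0 : 0 ≤ y := le_ciInf hSnn
  refine ⟨y, hy0, ?_, hlim⟩
  have h1 : Tendsto (fun n => f (S n)) atTop (𝓝 (f y)) := (hcont y hy0).tendsto.comp hlim
  have h2 : Tendsto (fun n => S (n+1)) atTop (𝓝 y) := hlim.comp (tendsto_add_atTop_nat 1)
  have h3 : (fun n => f (S n)) = fun n => S (n+1) := by
    funext n; exact (hSsucc n).symm
  rw [h3] at h1
  exact tendsto_nhds_unique h1 h2

/-- The scalar GBP message inverse-variance recursion
J^{(ℓ)} = a²(r + h²(w + k²J^{(ℓ-1)})⁻¹)⁻¹ converges, from any nonnegative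
initialization, to the unique nonnegative fixed point of
f(x) = a²/(r + h²/(w + k²x)). -/
theorem scalar_gbp_variance_convergence
    (a r h w k : ℝ) (ha : a ≠ 0) (hr : 0 < r) (hw : 0 < w) :
    ∃ xstar : ℝ, 0 ≤ xstar ∧
      (fun x : ℝ => a ^ 2 / (r + h ^ 2 / (w + k ^ 2 * x))) xstar = xstar ∧
      (∀ y : ℝ, 0 ≤ y →
        (fun x : ℝ => a ^ 2 / (r + h ^ 2 / (w + k ^ 2 * x))) y = y → y = xstar) ∧
      ∀ J0 : ℝ, 0 ≤ J0 →
        Tendsto (fun ℓ : ℕ =>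
            (fun x : ℝ => a ^ 2 / (r + h ^ 2 / (w + k ^ 2 * x)))^[ℓ] J0)
          atTop (𝓝 xstar) := by
  set F : ℝ → ℝ := fun x : ℝ => a ^ 2 / (r + h ^ 2 / (w + k ^ 2 * x)) with hF
  by_cases hdeg : h = 0 ∨ k = 0
  · -- degenerate case: F is constant
    have hconst : ∀ x : ℝ, F x = F 0 := by
      intro x
      rcases hdeg with h0 | k0
      · simp [hF, h0]
      · simp [hF, k0]
    have h0 : 0 ≤ F 0 := by
      have hD : (0:ℝ) < w + k ^ 2 * 0 := by positivity
      have : (0:ℝ) < r + h ^ 2 / (w + k ^ 2 * 0) := by positivity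
      rw [hF]; positivity
    refine ⟨F 0, h0, hconst (F 0), fun y _ hy => ?_, fun J0 _ => ?_⟩
    · rw [← hy]; exact hconst y
    · refine Tendsto.congr' ?_ (tendsto_const_nhds : Tendsto (fun _ : ℕ => F 0) atTop _)
      filter_upwards [eventually_ge_atTop 1] with ℓ hℓ
      obtain ⟨n, rfl⟩ := Nat.exists_eq_add_of_le hℓ
      show F 0 = F^[1 + n] J0
      rw [add_comm, Function.iterate_succ_apply']
      exact (hconst _).symm
  · push_neg at hdeg
    obtain ⟨hh, hk⟩ := hdeg
    have hk2 : (0:ℝ) < k ^ 2 :=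
      lt_of_le_of_ne (sq_nonneg k) (Ne.symm (pow_ne_zero 2 hk))
    have ha2 : (0:ℝ) < a ^ 2 :=
      lt_of_le_of_ne (sq_nonneg a) (Ne.symm (pow_ne_zero 2 ha))
    have hD : ∀ x : ℝ, 0 ≤ x → 0 < w + k ^ 2 * x := by intro x hx; positivity
    have hden : ∀ x : ℝ, 0 ≤ x → 0 < r + h ^ 2 / (w + k ^ 2 * x) := by
      intro x hx; have := hD x hx; positivity
    have hDD : ∀ x : ℝ, 0 ≤ x → 0 < r * (w + k ^ 2 * x) + h ^ 2 := by
      intro x hx; nlinarith [hD x hx, sq_nonneg h]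
    have hFpos : ∀ x : ℝ, 0 ≤ x → 0 < F x := by
      intro x hx; have := hden x hx; rw [hF]; positivity
    have hFx : ∀ x : ℝ, 0 ≤ x →
        F x = a ^ 2 * (w + k ^ 2 * x) / (r * (w + k ^ 2 * x) + h ^ 2) := by
      intro x hx
      simp only [hF]
      rw [div_eq_div_iff (hden x hx).ne' (hDD x hx).ne']
      field_simp [(hD x hx).ne']
    have hUB : ∀ x : ℝ, 0 ≤ x → F x ≤ a ^ 2 / r := by
      intro x hx
      simp only [hF]
      have h1 := hD x hx
      gcongr
      exact le_add_of_nonneg_right (div_nonneg (sq_nonneg h) h1.le)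
    have hMono : ∀ x y : ℝ, 0 ≤ x → x ≤ y → F x ≤ F y := by
      intro x y hx hxy
      have h1 := hD x hx
      have h2 := hD y (hx.trans hxy)
      have h3 := hden y (hx.trans hxy)
      simp only [hF]
      gcongr
    have hCont : ∀ x : ℝ, 0 ≤ x → ContinuousAt F x := by
      intro x hx
      have h1 : ContinuousAt (fun x : ℝ => w + k ^ 2 * x) x := by fun_prop
      have h2 : ContinuousAt (fun x : ℝ => h ^ 2 / (w + k ^ 2 * x)) x :=
        ContinuousAt.div continuousAt_const h1 (hD x hx).ne'
      have h3 : ContinuousAt (fun x : ℝ => r + h ^ 2 / (w + k ^ 2 * x)) x :=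
        continuousAt_const.add h2
      exact ContinuousAt.div continuousAt_const h3 (hden x hx).ne'
    have hpoly : ∀ s : ℝ, 0 ≤ s → F s = s →
        r * k ^ 2 * s ^ 2 + (r * w + h ^ 2) * s = a ^ 2 * k ^ 2 * s + a ^ 2 * w := by
      intro s hs hfixs
      have hD' := (hD s hs).ne'
      have hden' := (hden s hs).ne'
      rw [hF] at hfixs
      field_simp at hfixs
      linear_combination -hfixs
    have huniq2 : ∀ y s : ℝ, 0 < y → 0 < s → F y = y → F s = s → y = s := by
      intro y s hy hs hfy hfs
      have Ey := hpoly y hy.le hfy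
      have Es := hpoly s hs.le hfs
      have key : (s - y) * (r * k ^ 2 * y * s + a ^ 2 * w) = 0 := by
        linear_combination y * Es - s * Ey
      have hQ : 0 < r * k ^ 2 * y * s + a ^ 2 * w := by positivity
      have := (mul_eq_zero.mp key).resolve_right hQ.ne'
      linarith
    -- existence of the fixed point via iteration from 0
    obtain ⟨xstar, hx0, hfix, _⟩ :=
      gbp_iter_incr F (a ^ 2 / r) (fun x hx => (hFpos x hx).le) hMono hUB hCont 0 le_rfl
        (hFpos 0 le_rfl).le
    have hxpos : 0 < xstar := hfix ▸ hFpos xstar hx0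
    have Es := hpoly xstar hx0 hfix
    have hstep_le : ∀ x : ℝ, 0 ≤ x → x ≤ xstar → x ≤ F x := by
      intro x hx hxs
      rw [hFx x hx, le_div_iff₀ (hDD x hx)]
      have hid : xstar * (a ^ 2 * (w + k ^ 2 * x) - x * (r * (w + k ^ 2 * x) + h ^ 2))
          = (xstar - x) * (r * k ^ 2 * xstar * x + a ^ 2 * w) := by
        linear_combination (-x) * Es
      have hQ : 0 ≤ r * k ^ 2 * xstar * x + a ^ 2 * w := by positivity
      nlinarith [hid, mul_nonneg (sub_nonneg.2 hxs) hQ]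
    have hstep_ge : ∀ x : ℝ, xstar ≤ x → F x ≤ x := by
      intro x hxs
      have hx : 0 ≤ x := hx0.trans hxs
      rw [hFx x hx, div_le_iff₀ (hDD x hx)]
      have hid : xstar * (x * (r * (w + k ^ 2 * x) + h ^ 2) - a ^ 2 * (w + k ^ 2 * x))
          = (x - xstar) * (r * k ^ 2 * xstar * x + a ^ 2 * w) := by
        linear_combination x * Es
      have hQ : 0 ≤ r * k ^ 2 * xstar * x + a ^ 2 * w := by positivity
      nlinarith [hid, mul_nonneg (sub_nonneg.2 hxs) hQ]
    refine ⟨xstar, hx0, hfix, fun y hy hyfix => ?_, fun J0 hJ0 => ?_⟩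
    · have hypos : 0 < y := by
        have : F y = y := hyfix
        exact this ▸ hFpos y hy
      exact huniq2 y xstar hypos hxpos hyfix hfix
    · rcases le_total J0 xstar with hc | hc
      · obtain ⟨y, hy0, hyfix, hytend⟩ :=
          gbp_iter_incr F (a ^ 2 / r) (fun x hx => (hFpos x hx).le) hMono hUB hCont J0 hJ0
            (hstep_le J0 hJ0 hc)
        have hypos : 0 < y := hyfix ▸ hFpos y hy0
        rwa [huniq2 y xstar hypos hxpos hyfix hfix] at hytend
      · obtain ⟨y, hy0, hyfix, hytend⟩ :=
          gbp_iter_decr F (fun x hx => (hFpos x hx).le) hMono hCont J0 hJ0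
            (hstep_ge J0 hc)
        have hypos : 0 < y := hyfix ▸ hFpos y hy0
        rwa [huniq2 y xstar hypos hxpos hyfix hfix] at hytend
end

section
/- Let f : (0,∞) → (0,∞) be continuous, monotone increasing, satisfy f(αx) < α f(x) for all x > 0, α > 1, and suppose there exist 0 < L ≤ U with L ≤ f(x) ≤ U for all x > 0. Then for every x₀ > 0 the iterates x_{n+1} = f(x_n) converge to the unique fixed point x* of f, and L ≤ x* ≤ U. -/
open Filter Topology

/-- A continuous, monotone increasing, strictly subhomogeneous self-map of (0,∞) which is
bounded between 0 < L ≤ U has a unique fixed point x* ∈ [L,U], and all orbits from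
positive initial points converge to it. -/
theorem scalar_convergence_to_unique_fixed_point
    (f : ℝ → ℝ) (L U : ℝ)
    (hpos : ∀ x : ℝ, 0 < x → 0 < f x)
    (hcont : ContinuousOn f (Set.Ioi (0 : ℝ)))
    (hmono : ∀ x y : ℝ, 0 < x → x ≤ y → f x ≤ f y)
    (hsub : ∀ x α : ℝ, 0 < x → 1 < α → f (α * x) < α * f x)
    (hL : 0 < L) (hLU : L ≤ U)
    (hbnd : ∀ x : ℝ, 0 < x → L ≤ f x ∧ f x ≤ U) :
    ∃ xstar : ℝ, L ≤ xstar ∧ xstar ≤ U ∧ f xstar = xstar ∧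
      (∀ y : ℝ, 0 < y → f y = y → y = xstar) ∧
      ∀ x0 : ℝ, 0 < x0 → Tendsto (fun n : ℕ => f^[n] x0) atTop (𝓝 xstar) := by
  have hU : 0 < U := lt_of_lt_of_le hL hLU
  -- no fixed point can be strictly below another
  have key : ∀ y z : ℝ, 0 < y → f y = y → f z = z → y < z → False := by
    intro y z hy hfy hfz hlt
    have hα : 1 < z / y := (one_lt_div hy).2 hlt
    have h := hsub y (z / y) hy hα
    rw [div_mul_cancel₀ _ (ne_of_gt hy), hfy, hfz] at h
    rw [div_mul_cancel₀ _ (ne_of_gt hy)] at h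
    exact lt_irrefl z h
  have uniq : ∀ y z : ℝ, 0 < y → 0 < z → f y = y → f z = z → y = z := by
    intro y z hy hz hfy hfz
    rcases lt_trichotomy y z with h | h | h
    · exact absurd (key y z hy hfy hfz h) (by simp)
    · exact h
    · exact absurd (key z y hz hfz hfy h) (by simp)
  -- existence via IVT
  have hIcc : Set.Icc L U ⊆ Set.Ioi (0 : ℝ) := fun x hx => lt_of_lt_of_le hL hx.1
  have hgc : ContinuousOn (fun x => f x - x) (Set.Icc L U) :=
    (hcont.mono hIcc).sub continuousOn_id
  have hmem : (0 : ℝ) ∈ Set.Icc (f U - U) (f L - L) :=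
    ⟨sub_nonpos.2 (hbnd U hU).2, sub_nonneg.2 (hbnd L hL).1⟩
  obtain ⟨c, hcmem, hgc0⟩ := intermediate_value_Icc' hLU hgc hmem
  have hfc : f c = c := by linarith [sub_eq_zero.1 hgc0]
  have hcpos : 0 < c := lt_of_lt_of_le hL hcmem.1
  refine ⟨c, hcmem.1, hcmem.2, hfc, fun y hy hfy => uniq y c hy hcpos hfy hfc, ?_⟩
  intro x0 hx0
  -- set up sandwich
  set β : ℝ := U / L + 1 with hβdef
  have hβ : 1 < β := by
    rw [hβdef]
    have : (1 : ℝ) ≤ U / L := (one_le_div hL).2 hLU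
    linarith
  have hβpos : 0 < β := lt_trans one_pos hβ
  have ha : c < β * c := lt_mul_of_one_lt_left hcpos hβ
  have hb : c / β < c := div_lt_self hcpos hβ
  have hbpos : 0 < c / β := div_pos hcpos hβpos
  have hfa : f (β * c) < β * c := by
    have := hsub c β hcpos hβ
    rwa [hfc] at this
  have hfb : c / β < f (c / β) := by
    have h := hsub (c / β) β hbpos hβ
    rw [mul_div_cancel₀ _ (ne_of_gt hβpos), hfc] at h
    exact (div_lt_iff₀ hβpos).2 (by linarith)
  -- upper sequence
  set u : ℕ → ℝ := fun n => f^[n] (β * c) with hu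
  have hustep : ∀ n, u (n + 1) = f (u n) := fun n => Function.iterate_succ_apply' f n _
  have hup : ∀ n, c ≤ u n ∧ u (n + 1) ≤ u n := by
    intro n
    induction n with
    | zero => exact ⟨le_of_lt ha, by rw [hustep]; exact le_of_lt hfa⟩
    | succ n ih =>
      constructor
      · rw [hustep]
        calc c = f c := hfc.symm
        _ ≤ f (u n) := hmono c (u n) hcpos ih.1
      · have hp1 : 0 < u (n + 1) := lt_of_lt_of_le hcpos (by
          rw [hustep]
          calc c = f c := hfc.symm
          _ ≤ f (u n) := hmono c (u n) hcpos ih.1)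
        rw [hustep (n + 1)]
        calc f (u (n + 1)) ≤ f (u n) := hmono (u (n + 1)) (u n) hp1 ih.2
        _ = u (n + 1) := (hustep n).symm
  have huanti : Antitone u := antitone_nat_of_succ_le fun n => (hup n).2
  have hubdd : BddBelow (Set.range u) := ⟨c, fun x ⟨n, hn⟩ => hn ▸ (hup n).1⟩
  have hutend : Tendsto u atTop (𝓝 (⨅ n, u n)) := tendsto_atTop_ciInf huanti hubdd
  have hcle : c ≤ ⨅ n, u n := le_ciInf fun n => (hup n).1
  have hufix : f (⨅ n, u n) = ⨅ n, u n := by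
    have hpos' : (0:ℝ) < ⨅ n, u n := lt_of_lt_of_le hcpos hcle
    have hca : ContinuousAt f (⨅ n, u n) :=
      hcont.continuousAt (Ioi_mem_nhds hpos')
    have h1 : Tendsto (fun n => f (u n)) atTop (𝓝 (f (⨅ n, u n))) := hca.tendsto.comp hutend
    have h2 : Tendsto (fun n => u (n + 1)) atTop (𝓝 (⨅ n, u n)) :=
      hutend.comp (tendsto_add_atTop_nat 1)
    have : (fun n => u (n + 1)) = fun n => f (u n) := funext hustep
    rw [this] at h2
    exact tendsto_nhds_unique h1 h2
  have huc : (⨅ n, u n) = c :=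
    uniq _ c (lt_of_lt_of_le hcpos hcle) hcpos hufix hfc
  rw [huc] at hutend
  -- lower sequence
  set v : ℕ → ℝ := fun n => f^[n] (c / β) with hv
  have hvstep : ∀ n, v (n + 1) = f (v n) := fun n => Function.iterate_succ_apply' f n _
  have hvp : ∀ n, (0 < v n ∧ v n ≤ c) ∧ v n ≤ v (n + 1) := by
    intro n
    induction n with
    | zero => exact ⟨⟨hbpos, le_of_lt hb⟩, by rw [hvstep]; exact le_of_lt hfb⟩
    | succ n ih =>
      have hpos1 : 0 < v (n + 1) := lt_of_lt_of_le ih.1.1 ih.2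
      have hle1 : v (n + 1) ≤ c := by
        rw [hvstep]
        calc f (v n) ≤ f c := hmono (v n) c ih.1.1 ih.1.2
        _ = c := hfc
      refine ⟨⟨hpos1, hle1⟩, ?_⟩
      rw [hvstep (n + 1)]
      calc v (n + 1) = f (v n) := hvstep n
      _ ≤ f (v (n + 1)) := hmono (v n) (v (n + 1)) ih.1.1 ih.2
  have hvmono : Monotone v := monotone_nat_of_le_succ fun n => (hvp n).2
  have hvbdd : BddAbove (Set.range v) := ⟨c, fun x ⟨n, hn⟩ => hn ▸ (hvp n).1.2⟩
  have hvtend : Tendsto v atTop (𝓝 (⨆ n, v n)) := tendsto_atTop_ciSup hvmono hvbdd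
  have hvpos : 0 < ⨆ n, v n :=
    lt_of_lt_of_le (hvp 0).1.1 (le_ciSup hvbdd 0)
  have hvfix : f (⨆ n, v n) = ⨆ n, v n := by
    have hca : ContinuousAt f (⨆ n, v n) := hcont.continuousAt (Ioi_mem_nhds hvpos)
    have h1 : Tendsto (fun n => f (v n)) atTop (𝓝 (f (⨆ n, v n))) := hca.tendsto.comp hvtend
    have h2 : Tendsto (fun n => v (n + 1)) atTop (𝓝 (⨆ n, v n)) :=
      hvtend.comp (tendsto_add_atTop_nat 1)
    have : (fun n => v (n + 1)) = fun n => f (v n) := funext hvstep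
    rw [this] at h2
    exact tendsto_nhds_unique h1 h2
  have hvc : (⨆ n, v n) = c := uniq _ c hvpos hcpos hvfix hfc
  rw [hvc] at hvtend
  -- sandwich for the orbit of x1 = f x0
  set x1 : ℝ := f x0 with hx1
  have hx1mem := hbnd x0 hx0
  have hx1pos : 0 < x1 := hpos x0 hx0
  have hx1lo : c / β ≤ x1 := by
    have : c / β < L := by
      rw [div_lt_iff₀ hβpos]
      calc c ≤ U := hcmem.2
      _ < L * β := by
        rw [hβdef, mul_add, mul_one, mul_div_cancel₀ _ (ne_of_gt hL)]
        linarith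
    linarith [hx1mem.1]
  have hx1hi : x1 ≤ β * c := by
    calc x1 ≤ U := hx1mem.2
    _ ≤ β * c := by
      rw [hβdef, add_mul, one_mul, div_mul_eq_mul_div]
      have : U ≤ U * c / L := by
        rw [le_div_iff₀ hL]
        exact mul_le_mul_of_nonneg_left hcmem.1 (le_of_lt hU)
      linarith [hcpos]
  set s : ℕ → ℝ := fun n => f^[n] x1 with hs
  have hsstep : ∀ n, s (n + 1) = f (s n) := fun n => Function.iterate_succ_apply' f n _
  have hsand : ∀ n, v n ≤ s n ∧ s n ≤ u n := by
    intro n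
    induction n with
    | zero => exact ⟨hx1lo, hx1hi⟩
    | succ n ih =>
      constructor
      · rw [hsstep, hvstep]
        exact hmono (v n) (s n) (hvp n).1.1 ih.1
      · rw [hsstep, hustep]
        exact hmono (s n) (u n) (lt_of_lt_of_le (hvp n).1.1 ih.1) ih.2
  have hstend : Tendsto s atTop (𝓝 c) :=
    tendsto_of_tendsto_of_tendsto_of_le_of_le hvtend hutend
      (fun n => (hsand n).1) (fun n => (hsand n).2)
  have hshift : (fun n : ℕ => f^[n + 1] x0) = s := by
    funext n
    rw [Function.iterate_succ_apply]
  have h2 : Tendsto (fun n : ℕ => f^[n + 1] x0) atTop (𝓝 c) := hshift ▸ hstend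
  exact (tendsto_add_atTop_iff_nat (f := fun n : ℕ => f^[n] x0) 1).1 h2
end

section
/- Let F be a map on positive definite matrices that is monotone (X ⪰ Y implies F(X) ⪰ F(Y)) and strictly subhomogeneous (α F(X) ≻ F(αX) and F(α^{-1}X) ≻ α^{-1}F(X) for all X ≻ 0, α > 1). Then F is nonexpansive and, at any pair of distinct points, strictly contractive for the part metric: for all positive definite X ≠ Y, d(F(X), F(Y)) < d(X, Y), where d is the part metric. -/
/-! Let `d(X, Y) = log α` with the infimum attained, so `Y ≤ α • X` and `X ≤ α • Y`; since
`X ≠ Y`, `α > 1`. Monotonicity and strict subhomogeneity give `F Y ≤ F (α • X) < α • F X`, and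
symmetrically. A strict Loewner inequality survives a small decrease of the scale, so some
`β < α` still satisfies `F Y ≤ β • F X` and `F X ≤ β • F Y`, whence
`d(F X, F Y) ≤ log β < log α`. The infimum is attained because the admissible scales form a
nonempty closed set bounded below. -/

open Matrix

/-- The part (Birkhoff) metric on positive definite matrices. -/
noncomputable def partMetric {n : ℕ} (X Y : Matrix (Fin n) (Fin n) ℝ) : ℝ :=
  sInf {d : ℝ | ∃ α : ℝ, 1 ≤ α ∧ d = Real.log α ∧
    (α • X - Y).PosSemidef ∧ (α • Y - X).PosSemidef}

open Filter Topology
-- `Y ≤ α • X` unfolds to `(α • X - Y).PosSemidef`, the form used in `partMetric`.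
open scoped MatrixOrder

namespace Matrix

variable {n : Type*}

section Fintype

variable [Fintype n]

theorem isClosed_setOf_posSemidef : IsClosed {A : Matrix n n ℝ | A.PosSemidef} := by
  have hset : {A : Matrix n n ℝ | A.PosSemidef} =
      {A | Aᴴ = A} ∩ ⋂ x : n → ℝ, {A | 0 ≤ star x ⬝ᵥ A *ᵥ x} := by
    ext A
    simp only [Set.mem_ofPred_eq, Set.mem_inter_iff, Set.mem_iInter,
      posSemidef_iff_dotProduct_mulVec, IsHermitian]
  rw [hset]
  exact (isClosed_eq continuous_id.matrix_conjTranspose continuous_id).inter <|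
    isClosed_iInter fun x => isClosed_le continuous_const <|
      continuous_const.dotProduct (continuous_id.matrix_mulVec continuous_const)

theorem isClosed_setOf_le_smul (X Y : Matrix n n ℝ) : IsClosed {α : ℝ | Y ≤ α • X} :=
  isClosed_setOf_posSemidef.preimage ((continuous_id.smul continuous_const).sub continuous_const)

variable [DecidableEq n] {A C X Y : Matrix n n ℝ}

theorem PosDef.exists_pos_smul_one_le (hA : A.PosDef) :
    ∃ c : ℝ, 0 < c ∧ c • (1 : Matrix n n ℝ) ≤ A := by
  have hspec : ∀ x ∈ spectrum ℝ A, 0 < x := by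
    rw [hA.1.spectrum_real_eq_range_eigenvalues]
    rintro _ ⟨i, rfl⟩
    exact hA.eigenvalues_pos i
  obtain ⟨c, hc, hcA⟩ :=
    (ContinuousFunctionalCalculus.isCompact_spectrum (R := ℝ) A).exists_forall_le'
      continuousOn_id hspec
  refine ⟨c, hc, ?_⟩
  rw [← Algebra.algebraMap_eq_smul_one]
  exact algebraMap_le_of_le_spectrum hcA hA.1.isSelfAdjoint

theorem IsHermitian.exists_le_smul_one (hC : C.IsHermitian) :
    ∃ M : ℝ, C ≤ M • (1 : Matrix n n ℝ) := by
  obtain ⟨M, hM⟩ := (ContinuousFunctionalCalculus.isCompact_spectrum (R := ℝ) C).bddAbove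
  refine ⟨M, ?_⟩
  rw [← Algebra.algebraMap_eq_smul_one]
  exact le_algebraMap_of_spectrum_le hM hC.isSelfAdjoint

theorem PosDef.exists_pos_smul_le (hA : A.PosDef) (hC : C.IsHermitian) :
    ∃ ε : ℝ, 0 < ε ∧ ε • C ≤ A := by
  obtain ⟨c, hc, hcA⟩ := hA.exists_pos_smul_one_le
  obtain ⟨M, hCM⟩ := hC.exists_le_smul_one
  have hM : 0 < |M| + 1 := by positivity
  refine ⟨c / (|M| + 1), div_pos hc hM, ?_⟩
  have hcM : c / (|M| + 1) * M ≤ c := by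
    rw [div_mul_eq_mul_div, div_le_iff₀ hM]
    nlinarith [le_abs_self M]
  calc (c / (|M| + 1)) • C ≤ (c / (|M| + 1)) • M • (1 : Matrix n n ℝ) :=
        smul_le_smul_of_nonneg_left hCM (div_pos hc hM).le
    _ = (c / (|M| + 1) * M) • (1 : Matrix n n ℝ) := smul_smul _ _ _
    _ ≤ c • 1 := smul_le_smul_of_nonneg_right hcM zero_le_one
    _ ≤ A := hcA

theorem PosDef.eventually_le_smul_atTop (hX : X.PosDef) (hY : Y.IsHermitian) :
    ∀ᶠ α : ℝ in atTop, Y ≤ α • X := by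
  obtain ⟨ε, hε, hεY⟩ := hX.exists_pos_smul_le hY
  filter_upwards [eventually_ge_atTop ε⁻¹] with α hα
  calc Y = ε⁻¹ • ε • Y := (inv_smul_smul₀ hε.ne' Y).symm
    _ ≤ ε⁻¹ • X := smul_le_smul_of_nonneg_left hεY (inv_nonneg.2 hε.le)
    _ ≤ α • X := smul_le_smul_of_nonneg_right hα hX.posSemidef.nonneg

theorem eventually_nhds_le_smul {α : ℝ} (hX : X.PosSemidef) (h : (α • X - Y).PosDef) :
    ∀ᶠ β in 𝓝 α, Y ≤ β • X := by
  obtain ⟨ε, hε, hεX⟩ := h.exists_pos_smul_le hX.1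
  filter_upwards [eventually_gt_nhds (sub_lt_self α hε)] with β hβ
  calc Y ≤ (α - ε) • X := by
        rw [sub_smul, le_sub_iff_add_le, ← le_sub_iff_add_le']; exact hεX
    _ ≤ β • X := smul_le_smul_of_nonneg_right hβ.le hX.nonneg

end Fintype

theorem posDef_smul_map_sub_map {F : Matrix n n ℝ → Matrix n n ℝ}
    (hmono : ∀ X Y, Y.PosSemidef → (X - Y).PosSemidef → (F X - F Y).PosSemidef)
    (hsub : ∀ X (α : ℝ), X.PosDef → 1 < α → (α • F X - F (α • X)).PosDef)
    {α : ℝ} {X Y : Matrix n n ℝ} (hX : X.PosDef) (hY : Y.PosSemidef) (hα : 1 < α)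
    (h : Y ≤ α • X) : (α • F X - F Y).PosDef := by
  rw [← sub_add_sub_cancel _ (F (α • X))]
  exact (hsub X α hX hα).add_posSemidef (hmono _ _ hY h)

end Matrix

section PartMetric

variable {n : ℕ} {X Y : Matrix (Fin n) (Fin n) ℝ}

theorem partMetric_le_log {α : ℝ} (hα : 1 ≤ α) (hYX : Y ≤ α • X) (hXY : X ≤ α • Y) :
    partMetric X Y ≤ Real.log α :=
  csInf_le ⟨0, by rintro _ ⟨β, hβ, rfl, -, -⟩; exact Real.log_nonneg hβ⟩ ⟨α, hα, rfl, hYX, hXY⟩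

theorem exists_partMetric_eq_log (hX : X.PosDef) (hY : Y.PosDef) :
    ∃ α : ℝ, 1 ≤ α ∧ Y ≤ α • X ∧ X ≤ α • Y ∧ partMetric X Y = Real.log α := by
  set S := {α : ℝ | 1 ≤ α ∧ Y ≤ α • X ∧ X ≤ α • Y}
  have hS : S.Nonempty := ((eventually_ge_atTop 1).and
    ((hX.eventually_le_smul_atTop hY.1).and (hY.eventually_le_smul_atTop hX.1))).exists
  have hbdd : BddBelow S := ⟨1, fun _ h => h.1⟩
  obtain ⟨h1, hYX, hXY⟩ : sInf S ∈ S := (isClosed_Ici.inter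
    ((isClosed_setOf_le_smul X Y).inter (isClosed_setOf_le_smul Y X))).csInf_mem hS hbdd
  refine ⟨sInf S, h1, hYX, hXY, (partMetric_le_log h1 hYX hXY).antisymm ?_⟩
  refine le_csInf ⟨_, sInf S, h1, rfl, hYX, hXY⟩ ?_
  rintro _ ⟨α, hα, rfl, hαYX, hαXY⟩
  exact Real.log_le_log (by linarith) (csInf_le hbdd ⟨hα, hαYX, hαXY⟩)

end PartMetric

/-- A monotone, strictly subhomogeneous map on positive definite matrices is strictly
contractive at any pair of distinct points for the part metric. -/
theorem part_metric_strict_contraction {n : ℕ}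
    (F : Matrix (Fin n) (Fin n) ℝ → Matrix (Fin n) (Fin n) ℝ)
    (hFpd : ∀ X : Matrix (Fin n) (Fin n) ℝ, X.PosDef → (F X).PosDef)
    (hmono : ∀ X Y : Matrix (Fin n) (Fin n) ℝ,
      Y.PosSemidef → (X - Y).PosSemidef → (F X - F Y).PosSemidef)
    (hsub : ∀ (X : Matrix (Fin n) (Fin n) ℝ) (α : ℝ), X.PosDef → 1 < α →
      (α • F X - F (α • X)).PosDef ∧ (F (α⁻¹ • X) - α⁻¹ • F X).PosDef)
    (X Y : Matrix (Fin n) (Fin n) ℝ)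
    (hX : X.PosDef) (hY : Y.PosDef) (hXY : X ≠ Y) :
    partMetric (F X) (F Y) < partMetric X Y := by
  obtain ⟨α, hα1, hYαX, hXαY, hd⟩ := exists_partMetric_eq_log hX hY
  have hα : 1 < α := hα1.lt_of_ne fun h => hXY <|
    le_antisymm (by simpa [← h] using hXαY) (by simpa [← h] using hYαX)
  have hstrict := fun X α hX hα => (hsub X α hX hα).1
  have hFYX := posDef_smul_map_sub_map hmono hstrict hX hY.posSemidef hα hYαX
  have hFXY := posDef_smul_map_sub_map hmono hstrict hY hX.posSemidef hα hXαY
  obtain ⟨β, hβα, hβ1, hβYX, hβXY⟩ := ((eventually_gt_nhds hα).and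
    ((eventually_nhds_le_smul (hFpd X hX).posSemidef hFYX).and
      (eventually_nhds_le_smul (hFpd Y hY).posSemidef hFXY))).exists_lt
  calc partMetric (F X) (F Y) ≤ Real.log β := partMetric_le_log hβ1.le hβYX hβXY
    _ < Real.log α := Real.log_lt_log (by linarith) hβα
    _ = partMetric X Y := hd.symm
end

section
/- Let g(x) = (w + s(x))^{-1} where w > 0 and s : (0,∞) → (0,∞) converges to s* at a geometric rate with respect to the metric d(a,b) = |log a − log b| along a sequence x_n, i.e., d(s(x_n), s*) ≤ c·d(s(x_{n-1}), s*) with c < 1. Then the sequence P_n = (w + s(x_n))^{-1} converges to P* = (w + s*)^{-1}, and d(P_n, P*) ≤ d(s(x_n), s*), so P_n also converges at a geometric rate in the metric d. -/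
open Filter Topology

lemma log_shift_mono (w a b : ℝ) (hw : 0 < w) (ha : 0 < a) (hb : 0 < b) (hab : b ≤ a) :
    Real.log (w + a) - Real.log (w + b) ≤ Real.log a - Real.log b := by
  have h1 : Real.log ((w + a) * b) ≤ Real.log (a * (w + b)) :=
    Real.log_le_log (by positivity) (by nlinarith)
  rw [Real.log_mul (by positivity) (ne_of_gt hb),
      Real.log_mul (ne_of_gt ha) (by positivity)] at h1
  linarith

lemma log_shift_nonexp (w a b : ℝ) (hw : 0 < w) (ha : 0 < a) (hb : 0 < b) :
    |Real.log (w + a) - Real.log (w + b)| ≤ |Real.log a - Real.log b| := by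
  rcases le_total b a with h | h
  · rw [abs_of_nonneg (by
        have := Real.log_le_log (by positivity) (show w + b ≤ w + a by linarith); linarith),
      abs_of_nonneg (by
        have := Real.log_le_log hb h; linarith)]
    exact log_shift_mono w a b hw ha hb h
  · rw [abs_sub_comm, abs_sub_comm (Real.log a)]
    rw [abs_of_nonneg (by
        have := Real.log_le_log (by positivity) (show w + a ≤ w + b by linarith); linarith),
      abs_of_nonneg (by
        have := Real.log_le_log ha h; linarith)]
    exact log_shift_mono w b a hw hb ha h

/-- The belief variance P_n = (w + s_n)⁻¹ inherits geometric convergence in the metric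
d(a,b) = |log a − log b| from the message inverse variances s_n. -/
theorem belief_variance_geometric_convergence
    (w c sstar : ℝ) (s : ℕ → ℝ)
    (hw : 0 < w) (hsstar : 0 < sstar) (hspos : ∀ n : ℕ, 0 < s n)
    (hc0 : 0 ≤ c) (hc : c < 1)
    (hgeo : ∀ n : ℕ,
      |Real.log (s (n + 1)) - Real.log sstar| ≤ c * |Real.log (s n) - Real.log sstar|) :
    Tendsto (fun n : ℕ => (w + s n)⁻¹) atTop (𝓝 ((w + sstar)⁻¹)) ∧
    ∀ n : ℕ, |Real.log ((w + s n)⁻¹) - Real.log ((w + sstar)⁻¹)|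
      ≤ |Real.log (s n) - Real.log sstar| := by
  constructor
  · -- first show log (s n) → log sstar
    have hbound : ∀ n : ℕ, |Real.log (s n) - Real.log sstar|
        ≤ c ^ n * |Real.log (s 0) - Real.log sstar| := by
      intro n
      induction n with
      | zero => simp
      | succ k ih =>
        calc |Real.log (s (k + 1)) - Real.log sstar|
            ≤ c * |Real.log (s k) - Real.log sstar| := hgeo k
          _ ≤ c * (c ^ k * |Real.log (s 0) - Real.log sstar|) := by
              exact mul_le_mul_of_nonneg_left ih hc0
          _ = c ^ (k + 1) * |Real.log (s 0) - Real.log sstar| := by ring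
    have hpow : Tendsto (fun n : ℕ => c ^ n * |Real.log (s 0) - Real.log sstar|) atTop (𝓝 0) := by
      have := tendsto_pow_atTop_nhds_zero_of_lt_one hc0 hc
      simpa using this.mul_const _
    have hlog : Tendsto (fun n : ℕ => Real.log (s n)) atTop (𝓝 (Real.log sstar)) := by
      rw [tendsto_iff_dist_tendsto_zero]
      apply squeeze_zero (fun n => dist_nonneg) _ hpow
      intro n
      simpa [Real.dist_eq] using hbound n
    have hs : Tendsto s atTop (𝓝 sstar) := by
      have : Tendsto (fun n => Real.exp (Real.log (s n))) atTop (𝓝 (Real.exp (Real.log sstar))) :=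
        (Real.continuous_exp.tendsto _).comp hlog
      simpa [Real.exp_log hsstar, funext fun n => Real.exp_log (hspos n)] using this
    exact (Tendsto.const_add w hs).inv₀ (by positivity)
  · intro n
    have h1 : (w + s n)⁻¹ = (w + s n)⁻¹ := rfl
    rw [Real.log_inv, Real.log_inv]
    have := log_shift_nonexp w (s n) sstar hw (hspos n) hsstar
    calc |-Real.log (w + s n) - -Real.log (w + sstar)|
        = |Real.log (w + s n) - Real.log (w + sstar)| := by rw [abs_sub_comm]; ring_nf
      _ ≤ |Real.log (s n) - Real.log sstar| := this
end
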